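/- arXiv:2503.10425 — 2 statements merged into one kernel-verified Lean document; each statement's English description precedes it below -/
import Mathlib

section
/- Let G be a finite group, p a prime, and x a p-element of G. If y ∈ Sub_G(x) is G-conjugate to x, then y is already Sub_G(x)-conjugate to x. -/
variable {G : Type*} [Group G]

/-- `A` is subnormal in `B`: there is a chain `A = s 0 ⊴ s 1 ⊴ ⋯ ⊴ s n = B`. -/
def IsSubnormalIn (A B : Subgroup G) : Prop :=
  ∃ (n : ℕ) (s : ℕ → Subgroup G), s 0 = A ∧ s n = B ∧
    ∀ i < n, s i ≤ s (i + 1) ∧ ∀ g ∈ s (i + 1), ∀ a ∈ s i, g * a * g⁻¹ ∈ s i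

/-- The subnormaliser `Sub_G(x)` of an element `x`. -/
def subnormalizer (x : G) : Subgroup G :=
  Subgroup.closure
    {g : G | IsSubnormalIn (Subgroup.zpowers x) (Subgroup.closure {g, x})}

/-!
Fix a Sylow `p`-subgroup `P ∋ x` and write `S = Sub_G(x)`. Since `⟨x⟩` is subnormal in every
`p`-subgroup `R ∋ x` (a nilpotent group), and hence in `N_G(R)`, both `R` and `N_G(R)` lie
in `S`. So every Sylow subgroup of `G` containing `x` is a Sylow subgroup of `S`, and Sylow's
theorem in `S` shows: if `xʷ ∈ P` then `w • P = c • P` for some `c ∈ S`, so `c⁻¹ w ∈ N_G(P) ≤ S`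
and `w ∈ S`. Given `y = xᵍ ∈ S`, Sylow's theorem in `S` again yields `s ∈ S` with `yˢ ∈ P`;
then `g s ∈ S`, so the conjugating element `g` itself lies in `S`.
-/

open Subgroup MulAction

namespace IsSubnormalIn

theorem refl (A : Subgroup G) : IsSubnormalIn A A :=
  ⟨0, fun _ => A, rfl, rfl, fun _ hi => absurd hi (Nat.not_lt_zero _)⟩

theorem of_le_of_le {A B C : Subgroup G} (h : IsSubnormalIn A C) (hAB : A ≤ B) (hBC : B ≤ C) :
    IsSubnormalIn A B := by
  obtain ⟨n, s, rfl, rfl, hs⟩ := h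
  refine ⟨n, fun i => s i ⊓ B, inf_eq_left.mpr hAB, inf_eq_right.mpr hBC,
    fun i hi => ⟨inf_le_inf_right _ (hs i hi).1, ?_⟩⟩
  rintro g ⟨hgs, hgB⟩ a ⟨has, haB⟩
  exact ⟨(hs i hi).2 g hgs a has, B.mul_mem (B.mul_mem hgB haB) (B.inv_mem hgB)⟩

theorem trans_le_normalizer {A B C : Subgroup G} (h : IsSubnormalIn A B) (hBC : B ≤ C)
    (hC : C ≤ normalizer B) : IsSubnormalIn A C := by
  obtain ⟨n, s, rfl, rfl, hs⟩ := h
  refine ⟨n + 1, fun i => if i ≤ n then s i else C, by simp, by simp, fun i hi => ?_⟩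
  rcases Nat.lt_succ_iff_lt_or_eq.mp hi with hlt | rfl
  · simpa [hlt.le, Nat.succ_le_of_lt hlt] using hs i hlt
  · simp only [le_refl, if_true, Nat.not_succ_le_self, if_false]
    exact ⟨hBC, fun g hg b hb => (mem_normalizer_iff.mp (hC hg) b).mp hb⟩

theorem normal_trans {A B C : Subgroup G} (hAB : A ≤ B) (hB : B ≤ normalizer A)
    (h : IsSubnormalIn B C) : IsSubnormalIn A C := by
  obtain ⟨n, s, rfl, rfl, hs⟩ := h
  refine ⟨n + 1, fun | 0 => A | j + 1 => s j, rfl, rfl, fun i hi => ?_⟩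
  match i with
  | 0 => exact ⟨hAB, fun g hg a ha => (mem_normalizer_iff.mp (hB hg) a).mp ha⟩
  | j + 1 => exact hs j (Nat.lt_of_succ_lt_succ hi)

theorem map {N : Type*} [Group N] (f : G →* N) {A B : Subgroup G} (h : IsSubnormalIn A B) :
    IsSubnormalIn (A.map f) (B.map f) := by
  obtain ⟨n, s, rfl, rfl, hs⟩ := h
  refine ⟨n, fun i => (s i).map f, rfl, rfl, fun i hi => ⟨map_mono (hs i hi).1, ?_⟩⟩
  rintro - ⟨u, hu, rfl⟩ - ⟨v, hv, rfl⟩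
  rw [← map_inv, ← map_mul, ← map_mul]
  exact mem_map_of_mem f ((hs i hi).2 u hu v hv)

end IsSubnormalIn

theorem isSubnormalIn_top_of_normalizerCondition [Finite G] (hG : NormalizerCondition G)
    (A : Subgroup G) : IsSubnormalIn A ⊤ := by
  induction A using WellFoundedGT.induction with
  | _ A ih =>
    obtain rfl | hA := eq_or_ne A ⊤
    · exact IsSubnormalIn.refl ⊤
    · exact (ih _ (hG A hA.lt_top)).normal_trans le_normalizer le_rfl

theorem IsPGroup.isSubnormalIn [Finite G] {p : ℕ} [Fact p.Prime] {A K : Subgroup G}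
    (hK : IsPGroup p K) (hAK : A ≤ K) : IsSubnormalIn A K := by
  have := hK.isNilpotent
  have h := (isSubnormalIn_top_of_normalizerCondition Group.normalizerCondition_of_isNilpotent
    (A.subgroupOf K)).map K.subtype
  rwa [subgroupOf_map_subtype, inf_eq_left.mpr hAK, ← MonoidHom.range_eq_map,
    range_subtype] at h

theorem normalizer_le_subnormalizer [Finite G] {p : ℕ} [Fact p.Prime] {x : G} {R : Subgroup G}
    (hR : IsPGroup p R) (hxR : x ∈ R) : normalizer R ≤ subnormalizer x := by
  intro n hn
  apply Subgroup.subset_closure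
  have hxN : IsSubnormalIn (zpowers x) (normalizer R) :=
    (hR.isSubnormalIn (zpowers_le.mpr hxR)).trans_le_normalizer le_normalizer le_rfl
  refine hxN.of_le_of_le (zpowers_le.mpr (subset_closure (by simp))) ((closure_le _).mpr ?_)
  rintro g (rfl | rfl)
  exacts [hn, le_normalizer hxR]

theorem le_subnormalizer [Finite G] {p : ℕ} [Fact p.Prime] {x : G} {R : Subgroup G}
    (hR : IsPGroup p R) (hxR : x ∈ R) : R ≤ subnormalizer x :=
  le_normalizer.trans (normalizer_le_subnormalizer hR hxR)

theorem Sylow.mem_smul_iff {p : ℕ} {P : Sylow p G} {g x : G} :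
    x ∈ ((g • P : Sylow p G) : Subgroup G) ↔ g⁻¹ * x * g ∈ (P : Subgroup G) := by
  rw [Sylow.coe_subgroup_smul, Subgroup.mem_pointwise_smul_iff_inv_smul_mem]
  simp [MulAut.smul_def, mul_assoc]

theorem Sylow.exists_smul_eq_of_le [Finite G] {p : ℕ} [Fact p.Prime] {S : Subgroup G}
    {P Q : Sylow p G} (hP : (P : Subgroup G) ≤ S) (hQ : (Q : Subgroup G) ≤ S) :
    ∃ s ∈ S, s • P = Q := by
  obtain ⟨s, hs⟩ := exists_smul_eq S (P.subtype hP) (Q.subtype hQ)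
  rw [Sylow.smul_subtype] at hs
  exact ⟨s, s.2, Sylow.subtype_injective hs⟩

theorem Sylow.exists_conj_mem_of_le [Finite G] {p : ℕ} [Fact p.Prime] {S : Subgroup G}
    {P : Sylow p G} (hP : (P : Subgroup G) ≤ S) {y : G} (hyS : y ∈ S) {k : ℕ}
    (hy : orderOf y = p ^ k) : ∃ s ∈ S, s⁻¹ * y * s ∈ (P : Subgroup G) := by
  have hyp : IsPGroup p (zpowers (⟨y, hyS⟩ : S)) :=
    IsPGroup.of_card (by rw [Nat.card_zpowers, ← orderOf_submonoid, hy])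
  obtain ⟨Q, hQ⟩ := hyp.exists_le_sylow
  obtain ⟨s, hs⟩ := exists_smul_eq S (P.subtype hP) Q
  have hyQ : (⟨y, hyS⟩ : S) ∈ ((s • P.subtype hP : Sylow p S) : Subgroup S) :=
    hs ▸ hQ (mem_zpowers _)
  exact ⟨s, s.2, by simpa [mem_subgroupOf] using Sylow.mem_smul_iff.mp hyQ⟩

theorem mem_subnormalizer_of_conj_mem [Finite G] {p : ℕ} [Fact p.Prime] {x : G}
    {P : Sylow p G} (hxP : x ∈ (P : Subgroup G)) {g : G}
    (hg : g⁻¹ * x * g ∈ (P : Subgroup G)) : g ∈ subnormalizer x := by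
  have hPS := le_subnormalizer P.2 hxP
  obtain ⟨c, hc, hcP⟩ := Sylow.exists_smul_eq_of_le hPS
    (le_subnormalizer (g • P).2 (Sylow.mem_smul_iff.mpr hg))
  have hcg : c⁻¹ * g ∈ normalizer (P : Subgroup G) :=
    Sylow.smul_eq_iff_mem_normalizer.mp (by rw [mul_smul, ← hcP, inv_smul_smul])
  simpa using mul_mem hc (normalizer_le_subnormalizer P.2 hxP hcg)

theorem stmt_10 [Fintype G] {p : ℕ} (hp : p.Prime)
    (x : G) (hx : ∃ k : ℕ, orderOf x = p ^ k)
    (y : G) (hy : y ∈ subnormalizer x) (hconj : ∃ g : G, g⁻¹ * x * g = y) :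
    ∃ h ∈ subnormalizer x, h⁻¹ * x * h = y := by
  have := Fact.mk hp
  obtain ⟨g, rfl⟩ := hconj
  obtain ⟨k, hk⟩ := hx
  obtain ⟨P, hP⟩ : ∃ P : Sylow p G, zpowers x ≤ P :=
    (IsPGroup.of_card (by rw [Nat.card_zpowers, hk])).exists_le_sylow
  have hxP : x ∈ (P : Subgroup G) := hP (mem_zpowers x)
  have hyk : orderOf (g⁻¹ * x * g) = p ^ k :=
    hk ▸ (SemiconjBy.orderOf_eq g⁻¹ (by simp [SemiconjBy, mul_assoc])).symm
  obtain ⟨s, hs, hsP⟩ := Sylow.exists_conj_mem_of_le (le_subnormalizer P.2 hxP) hy hyk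
  refine ⟨g, ?_, rfl⟩
  have hgs : g * s ∈ subnormalizer x :=
    mem_subnormalizer_of_conj_mem hxP (by simpa [mul_assoc] using hsP)
  simpa using mul_mem hgs (inv_mem hs)
end

section
/- Let G be a finite group, p a prime, and x ∈ G a p-element. Then Sub_G(x) is generated by the normalizers N_G(Q) of the radical p-subgroups Q of G that contain x. -/
variable {G : Type*} [Group G]

/-- `Q` is a radical `p`-subgroup: `Q = O_p(N_G(Q))`, i.e. `Q` is a `p`-subgroup
containing every normal `p`-subgroup of its normaliser. -/
def IsRadicalPSubgroup (p : ℕ) (Q : Subgroup G) : Prop :=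
  IsPGroup p Q ∧ ∀ M : Subgroup G, M ≤ Subgroup.normalizer (Q : Set G) → IsPGroup p M →
    (∀ h ∈ Subgroup.normalizer (Q : Set G), ∀ m ∈ M, h * m * h⁻¹ ∈ M) → M ≤ Q

/-!
If `⟨x⟩` is subnormal in `H = ⟨g, x⟩`, then `x` lies in the `p`-core `O_p(H)`, a `p`-subgroup
normalised by `g`. Every `p`-subgroup `Q` lies in a radical one whose normaliser contains
`N_G(Q)`: take `R` maximal among the `p`-subgroups with `N_G(Q) ≤ N_G(R)`; then `O_p(N_G(R))` is
another such subgroup, hence equals `R`. Conversely, if `g` normalises a `p`-subgroup `Q ∋ x`, then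
`Q ∩ ⟨g, x⟩` is normal in `⟨g, x⟩`, and `⟨x⟩` is subnormal in it because `p`-groups are nilpotent.
-/

open Subgroup

theorem Maximal.orderIso_apply {α : Type*} [Preorder α] {φ : α → Prop} {x : α} (f : α ≃o α)
    (hφ : ∀ y, φ (f y) ↔ φ y) (hx : Maximal φ x) : Maximal φ (f x) := by
  refine ⟨(hφ x).2 hx.prop, fun y hy hxy => ?_⟩
  have hy' : φ (f.symm y) := (hφ _).1 (by rwa [f.apply_symm_apply])
  exact f.symm_apply_le.1 (hx.2 hy' (f.le_symm_apply.2 hxy))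

namespace Subgroup

section pCore

variable {p : ℕ} {K L M P : Subgroup G}

/-- The `p`-core `O_p(K)`. -/
def pCore (p : ℕ) (K : Subgroup G) : Subgroup G :=
  ⨅ (P : Subgroup G) (_ : Maximal (fun Q : Subgroup G => IsPGroup p Q ∧ Q ≤ K) P), P

theorem mem_pCore {g : G} :
    g ∈ pCore p K ↔ ∀ P, Maximal (fun Q : Subgroup G => IsPGroup p Q ∧ Q ≤ K) P → g ∈ P := by
  simp only [pCore, mem_iInf]

theorem pCore_le_of_maximal (hP : Maximal (fun Q : Subgroup G => IsPGroup p Q ∧ Q ≤ K) P) :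
    pCore p K ≤ P :=
  iInf₂_le P hP

theorem exists_maximal_pSubgroup [Finite G] (p : ℕ) (K : Subgroup G) :
    ∃ P, Maximal (fun Q : Subgroup G => IsPGroup p Q ∧ Q ≤ K) P :=
  let ⟨P, _, hP⟩ := Finite.exists_le_maximal (α := Subgroup G) (a := ⊥) ⟨IsPGroup.of_bot, bot_le⟩
  ⟨P, hP⟩

theorem isPGroup_pCore [Finite G] : IsPGroup p (pCore p K) :=
  let ⟨_, hP⟩ := exists_maximal_pSubgroup p K
  hP.prop.1.to_le (pCore_le_of_maximal hP)

theorem pCore_le [Finite G] : pCore p K ≤ K :=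
  let ⟨_, hP⟩ := exists_maximal_pSubgroup p K
  (pCore_le_of_maximal hP).trans hP.prop.2

theorem le_pCore (hM : IsPGroup p M) (hMK : M ≤ K) (hKM : K ≤ normalizer M) : M ≤ pCore p K :=
  le_iInf₂ fun P hP =>
    have hsup : IsPGroup p (P ⊔ M : Subgroup G) :=
      hP.prop.1.to_sup_of_normal_right' hM (hP.prop.2.trans hKM)
    le_sup_right.trans (hP.eq_of_le ⟨hsup, sup_le hP.prop.2 hMK⟩ le_sup_left).ge

theorem pCore_eq_self [Finite G] (hK : IsPGroup p K) : pCore p K = K :=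
  pCore_le.antisymm (le_pCore hK le_rfl le_normalizer)

theorem maximal_map_conj {g : G} (hg : g ∈ normalizer K)
    (hP : Maximal (fun Q : Subgroup G => IsPGroup p Q ∧ Q ≤ K) P) :
    Maximal (fun Q : Subgroup G => IsPGroup p Q ∧ Q ≤ K) (P.map (MulAut.conj g).toMonoidHom) := by
  let e := MulAut.conj g
  have hK : K.map e.toMonoidHom = K := mem_normalizer_iff_map_conj_eq.mp hg
  refine hP.orderIso_apply (MulEquiv.mapSubgroup e) fun Q => and_congr ?_ ?_
  · exact ⟨fun h => h.of_equiv (Q.equivMapOfInjective _ e.injective).symm, fun h => h.map _⟩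
  · conv_lhs => rw [← hK]
    exact map_le_map_iff_of_injective e.injective

theorem normalizer_le_normalizer_pCore [Finite G] : normalizer K ≤ normalizer (pCore p K : Set G) :=
  fun g hg => mem_normalizer_fintype fun h hh => mem_pCore.mpr fun P hP => by
    simpa using mem_map_equiv.mp (mem_pCore.mp hh _ (maximal_map_conj (inv_mem hg) hP))

theorem le_normalizer_pCore [Finite G] : K ≤ normalizer (pCore p K : Set G) :=
  le_normalizer.trans normalizer_le_normalizer_pCore

theorem pCore_mono_of_le_normalizer [Finite G] (hKL : K ≤ L) (hLK : L ≤ normalizer K) :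
    pCore p K ≤ pCore p L :=
  le_pCore isPGroup_pCore (pCore_le.trans hKL) (hLK.trans normalizer_le_normalizer_pCore)

end pCore

end Subgroup

section Subnormal

variable {A B C : Subgroup G}

theorem IsSubnormalIn.refl_s17 (A : Subgroup G) : IsSubnormalIn A A :=
  ⟨0, fun _ => A, rfl, rfl, by simp⟩

theorem IsSubnormalIn.of_le_normalizer (hAB : A ≤ B) (hBA : B ≤ normalizer (A : Set G)) :
    IsSubnormalIn A B := by
  refine ⟨1, fun i => if i = 0 then A else B, rfl, rfl, fun i hi => ?_⟩
  obtain rfl : i = 0 := by omega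
  exact ⟨hAB, fun g hg a ha => (mem_normalizer_iff.mp (hBA hg) a).mp ha⟩

theorem IsSubnormalIn.trans (hAB : IsSubnormalIn A B) (hBC : IsSubnormalIn B C) :
    IsSubnormalIn A C := by
  obtain ⟨m, s, rfl, rfl, hs⟩ := hAB
  obtain ⟨n, t, ht0, rfl, ht⟩ := hBC
  set u : ℕ → Subgroup G := fun i => if i ≤ m then s i else t (i - m)
  have hus : ∀ i ≤ m, u i = s i := fun i h => if_pos h
  have hut : ∀ i ≥ m, u i = t (i - m) := fun i h => by
    rcases h.eq_or_lt with rfl | h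
    · rw [hus _ le_rfl, Nat.sub_self, ht0]
    · exact if_neg h.not_ge
  refine ⟨m + n, u, hus 0 (Nat.zero_le m), by rw [hut _ (Nat.le_add_right m n),
    Nat.add_sub_cancel_left], fun i hi => ?_⟩
  rcases lt_or_ge i m with h | h
  · rw [hus i h.le, hus (i + 1) h]
    exact hs i h
  · rw [hut i h, hut (i + 1) (by omega), Nat.sub_add_comm h]
    exact ht (i - m) (by omega)

variable [Finite G] {p : ℕ}

theorem IsSubnormalIn.le_pCore (h : IsSubnormalIn A B) (hA : IsPGroup p A) : A ≤ pCore p B := by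
  obtain ⟨n, s, rfl, rfl, hs⟩ := h
  suffices ∀ i ≤ n, s 0 ≤ pCore p (s i) from this n le_rfl
  intro i hi
  induction i with
  | zero => exact (pCore_eq_self hA).ge
  | succ i ih =>
    obtain ⟨hle, hconj⟩ := hs i (by omega)
    exact (ih (by omega)).trans
      (pCore_mono_of_le_normalizer hle fun g hg => mem_normalizer_fintype (hconj g hg))

variable [Fact p.Prime]

theorem IsPGroup.lt_inf_normalizer (hB : IsPGroup p B) (hAB : A < B) :
    A < B ⊓ normalizer (A : Set G) := by
  have := hB.isNilpotent
  have hA : A.subgroupOf B < ⊤ := lt_top_iff_ne_top.mpr fun h => hAB.not_ge (subgroupOf_eq_top.mp h)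
  have hlt := Group.normalizerCondition_of_isNilpotent _ hA
  rw [← subgroupOf_normalizer_eq hAB.le] at hlt
  have := (map_lt_map_iff_of_injective B.subtype_injective).mpr hlt
  simpa [subgroupOf_map_subtype, inf_of_le_left hAB.le, inf_comm] using this

theorem IsPGroup.isSubnormalIn_s17 (hB : IsPGroup p B) (hAB : A ≤ B) : IsSubnormalIn A B := by
  induction A using WellFoundedGT.induction with
  | _ A ih =>
    rcases hAB.eq_or_lt with rfl | hlt
    · exact .refl A
    · have hA := hB.lt_inf_normalizer hlt
      exact (IsSubnormalIn.of_le_normalizer hA.le inf_le_right).trans (ih _ hA inf_le_left)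

end Subnormal

theorem IsPGroup.isSubnormalIn_of_le_normalizer [Finite G] {p : ℕ} [Fact p.Prime]
    {Q A H : Subgroup G} (hQ : IsPGroup p Q) (hAQ : A ≤ Q) (hAH : A ≤ H)
    (hHQ : H ≤ normalizer (Q : Set G)) : IsSubnormalIn A H :=
  have hQH : H ≤ normalizer (Q ⊓ H : Set G) :=
    (le_inf hHQ le_normalizer).trans inf_normalizer_le_normalizer_inf
  ((hQ.to_le inf_le_left).isSubnormalIn_s17 (le_inf hAQ hAH)).trans
    (.of_le_normalizer inf_le_right hQH)

theorem exists_isRadicalPSubgroup_le [Finite G] {p : ℕ} {Q : Subgroup G} (hQ : IsPGroup p Q) :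
    ∃ R, IsRadicalPSubgroup p R ∧ Q ≤ R ∧
      normalizer (Q : Set G) ≤ normalizer (R : Set G) := by
  obtain ⟨R, hQR, hR⟩ := Finite.exists_le_maximal (α := Subgroup G)
    (p := fun R => IsPGroup p R ∧ normalizer (Q : Set G) ≤ normalizer (R : Set G)) ⟨hQ, le_rfl⟩
  have hcore : pCore p (normalizer (R : Set G)) = R :=
    (hR.eq_of_le ⟨isPGroup_pCore, hR.prop.2.trans le_normalizer_pCore⟩
      (le_pCore hR.prop.1 le_normalizer le_rfl)).symm
  refine ⟨R, ⟨hR.prop.1, fun M hMN hM hNM => ?_⟩, hQR, hR.prop.2⟩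
  exact hcore ▸ le_pCore hM hMN fun g hg => mem_normalizer_fintype (hNM g hg)

theorem stmt_17 [Fintype G] {p : ℕ} (hp : p.Prime)
    (x : G) (hx : ∃ k : ℕ, orderOf x = p ^ k) :
    subnormalizer x =
      ⨆ (Q : Subgroup G) (_ : IsRadicalPSubgroup p Q ∧ x ∈ Q), Subgroup.normalizer (Q : Set G) := by
  have : Fact p.Prime := ⟨hp⟩
  have hxp : IsPGroup p (zpowers x) :=
    let ⟨k, hk⟩ := hx
    .of_card (by rw [Nat.card_zpowers, hk])
  refine le_antisymm ((closure_le _).mpr fun g hg => ?_)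
    (iSup₂_le fun Q hQ g hg => subset_closure ?_)
  · have hgH : g ∈ closure {g, x} := subset_closure (by simp)
    obtain ⟨R, hR, hcore_le, hNR⟩ :=
      exists_isRadicalPSubgroup_le (isPGroup_pCore (K := closure {g, x}))
    exact le_iSup₂ (f := fun Q (_ : IsRadicalPSubgroup p Q ∧ x ∈ Q) => normalizer (Q : Set G)) R
      ⟨hR, hcore_le (hg.le_pCore hxp (mem_zpowers x))⟩ (hNR (le_normalizer_pCore hgH))
  · have hHQ : closure {g, x} ≤ normalizer (Q : Set G) :=
      (closure_le _).mpr (Set.insert_subset hg (Set.singleton_subset_iff.mpr (le_normalizer hQ.2)))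
    exact hQ.1.1.isSubnormalIn_of_le_normalizer (zpowers_le.mpr hQ.2)
      (zpowers_le.mpr (subset_closure (by simp))) hHQ
end
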